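/- For all computably transparent partial multifunctions f,g on ℕ: f ≤_W g if and only if j_f ≤_r j_g. Moreover, for every computably transparent U, the operation j_U is monotone and preserves arbitrary intersections; conversely, for every monotone operation j : Ω → Ω preserving arbitrary intersections, U_j is computably transparent and j_{U_j} = j. Hence the Weihrauch degrees of partial multifunctions on ℕ are isomorphic to the r-degrees of monotone, intersection-preserving operations on Ω. -/

import Mathlib

namespace KleeneOracle

/-- `e ∗ x`: application of the `e`-th partial computable function on ℕ. -/
def ap (e x : ℕ) : Part ℕ :=
  Nat.Partrec.Code.eval (Denumerable.ofNat Nat.Partrec.Code e) x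

/-- `e ∗ A := {e ∗ a : a ∈ A}`. -/
def apSet (e : ℕ) (A : Set ℕ) : Set ℕ := {z | ∃ a ∈ A, z ∈ ap e a}

/-- A partial multifunction on ℕ. -/
abbrev Multifun := ℕ → Part (Set ℕ)

def Transparent (U : Multifun) : Prop :=
  ∃ u : ℕ, ∀ (e x : ℕ) (A : Set ℕ), A ∈ U x → (∀ y ∈ A, (ap e y).Dom) →
    ∃ c ∈ ap u e, ∃ d ∈ ap c x, ∃ B ∈ U d, B ⊆ apSet e A

def Inflationary (U : Multifun) : Prop :=
  ∃ η : ℕ, ∀ x : ℕ, ∃ c ∈ ap η x, ∃ B ∈ U c, B ⊆ {x}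

def mcomp (g f : Multifun) : Multifun := fun x =>
  ⟨∃ A ∈ f x, ∀ y ∈ A, (g y).Dom,
   fun _ => {z | ∃ A ∈ f x, ∃ y ∈ A, ∃ B ∈ g y, z ∈ B}⟩

def Idempotent (U : Multifun) : Prop :=
  ∃ μ : ℕ, ∀ (x : ℕ) (A : Set ℕ), A ∈ mcomp U U x →
    ∃ c ∈ ap μ x, ∃ B ∈ U c, B ⊆ A

def mRed (f g : Multifun) : Prop :=
  ∃ e : ℕ, ∀ (x : ℕ) (A : Set ℕ), A ∈ f x →
    ∃ c ∈ ap e x, ∃ B ∈ g c, B ⊆ A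

def wRed (f g : Multifun) : Prop :=
  ∃ em ep : ℕ, ∀ (x : ℕ) (A : Set ℕ), A ∈ f x →
    ∃ c ∈ ap em x, ∃ B ∈ g c, ∀ y ∈ B, ∃ z ∈ ap ep (Nat.pair x y), z ∈ A

def Weih (g : Multifun) : Multifun := fun w =>
  ⟨∃ c ∈ ap w.unpair.1 w.unpair.2.unpair.2, ∃ B ∈ g c,
     ∀ y ∈ B, (ap w.unpair.2.unpair.1 (Nat.pair w.unpair.2.unpair.2 y)).Dom,
   fun _ => {z | ∃ c ∈ ap w.unpair.1 w.unpair.2.unpair.2, ∃ B ∈ g c,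
     ∃ y ∈ B, z ∈ ap w.unpair.2.unpair.1 (Nat.pair w.unpair.2.unpair.2 y)}⟩

def idsq (g : Multifun) : Multifun := fun w =>
  if w.unpair.1 = 0 then Part.some {w.unpair.2}
  else if w.unpair.1 = 1 then g w.unpair.2
  else Part.none

def pWeih (g : Multifun) : Multifun := Weih (idsq g)

def pwRed (f g : Multifun) : Prop := wRed f (idsq g)

def Med (Q : Set ℕ) : Multifun := fun e =>
  ⟨∀ a ∈ Q, (ap e a).Dom, fun _ => apSet e Q⟩

def MedRed (P Q : Set ℕ) : Prop :=
  ∃ e : ℕ, (∀ a ∈ Q, (ap e a).Dom) ∧ apSet e Q ⊆ P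

def constMF (P : Set ℕ) : Multifun := fun _ => Part.some P

def imp (p q : Set ℕ) : Set ℕ := {e | ∀ x ∈ p, ∃ z ∈ ap e x, z ∈ q}

def OpMonotone (j : Set ℕ → Set ℕ) : Prop :=
  ∃ u : ℕ, ∀ p q : Set ℕ, ∀ a ∈ imp p q, ∃ c ∈ ap u a, c ∈ imp (j p) (j q)

def OpInflationary (j : Set ℕ → Set ℕ) : Prop :=
  ∃ e : ℕ, ∀ p : Set ℕ, e ∈ imp p (j p)

def OpIdempotent (j : Set ℕ → Set ℕ) : Prop :=
  ∃ e : ℕ, ∀ p : Set ℕ, e ∈ imp (j (j p)) (j p)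

def LawvereTierney (j : Set ℕ → Set ℕ) : Prop :=
  OpMonotone j ∧ OpInflationary j ∧ OpIdempotent j

def jU (U : Multifun) (p : Set ℕ) : Set ℕ := {x | ∃ A ∈ U x, A ⊆ p}

def SingleValued (U : Multifun) : Prop := ∀ x : ℕ, ∀ A ∈ U x, ∃ y : ℕ, A = {y}

def presInter (j : Set ℕ → Set ℕ) : Prop :=
  ∀ (ι : Type) [Nonempty ι] (p : ι → Set ℕ), j (⋂ i, p i) = ⋂ i, j (p i)

def presUnion (j : Set ℕ → Set ℕ) : Prop :=
  ∀ (ι : Type) (p : ι → Set ℕ), j (⋃ i, p i) = ⋃ i, j (p i)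

def Uop (j : Set ℕ → Set ℕ) : Multifun := fun x =>
  ⟨∃ p : Set ℕ, x ∈ j p, fun _ => ⋂₀ {p : Set ℕ | x ∈ j p}⟩

def mMorphism (e : ℕ) (f g : Multifun) : Prop :=
  ∀ (x : ℕ) (A : Set ℕ), A ∈ f x → ∃ c ∈ ap e x, ∃ B ∈ g c, B ⊆ A

def rMorphism (e : ℕ) (j k : Set ℕ → Set ℕ) : Prop :=
  ∀ p : Set ℕ, e ∈ imp (j p) (k p)

def rRed (j k : Set ℕ → Set ℕ) : Prop := ∃ e : ℕ, rMorphism e j k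


/-!
For `x ∈ dom U` the set `U x` is the least `p` with `x ∈ j_U p`; hence `j_U` preserves nonempty
intersections, and an intersection-preserving `j` is recovered as `j_{U_j}` from these least sets.
Monotonicity of `j_U`, instantiated at a code `e ∈ A ⊸ e ∗ A`, is computable transparency of `U`.
An r-morphism `j_f → j_g` maps each instance `x` of `f` to an instance of `g` whose answers lie in
`f x`: a Weihrauch reduction with the identity as backward map. Conversely, the backward map
`y ↦ ep ∗ ⟨x, y⟩` of a Weihrauch reduction lies in `B ⊸ f x`, so monotonicity of `j_g` folds it
into the forward map.
-/

lemma ap_partrec₂ : Partrec₂ ap :=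
  Nat.Partrec.Code.eval_part.comp ((Computable.ofNat _).comp Computable.fst) Computable.snd

lemma exists_ap_eq {F : ℕ →. ℕ} (hF : Partrec F) : ∃ e : ℕ, ∀ x, ap e x = F x := by
  obtain ⟨c, hc⟩ := Nat.Partrec.Code.exists_code.1 (Partrec.nat_iff.1 hF)
  exact ⟨Encodable.encode c, fun x => by simp [ap, hc]⟩

lemma exists_ap_curry {F : ℕ → ℕ →. ℕ} (hF : Partrec₂ F) :
    ∃ u : ℕ, ∀ a : ℕ, ∃ c ∈ ap u a, ∀ x, ap c x = F a x := by
  obtain ⟨cF, hcF⟩ := Nat.Partrec.Code.exists_code.1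
    (Partrec.nat_iff.1 <|
      hF.comp (Computable.fst.comp Computable.unpair) (Computable.snd.comp Computable.unpair))
  have hcurry : Computable fun a => Encodable.encode (Nat.Partrec.Code.curry cF a) :=
    Computable.encode.comp
      (Nat.Partrec.Code.primrec₂_curry.to_comp.comp (Computable.const cF) Computable.id)
  obtain ⟨u, hu⟩ := exists_ap_eq hcurry.partrec
  exact ⟨u, fun a => ⟨_, by rw [hu]; exact Part.mem_some _, fun x => by
    simp [ap, Nat.Partrec.Code.eval_curry, hcF]⟩⟩

lemma imp_mono {p p' q q' : Set ℕ} (hp : p' ⊆ p) (hq : q ⊆ q') : imp p q ⊆ imp p' q' :=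
  fun _ he x hx => (he x (hp hx)).imp fun _ ⟨hz, hzq⟩ => ⟨hz, hq hzq⟩

lemma dom_of_mem_imp {e : ℕ} {p q : Set ℕ} (he : e ∈ imp p q) : ∀ y ∈ p, (ap e y).Dom :=
  fun y hy => let ⟨_, hz, _⟩ := he y hy; Part.dom_iff_mem.2 ⟨_, hz⟩

lemma apSet_subset_of_mem_imp {e : ℕ} {p q : Set ℕ} (he : e ∈ imp p q) : apSet e p ⊆ q := by
  rintro z ⟨y, hy, hz⟩
  obtain ⟨z', hz', hz'q⟩ := he y hy
  rwa [Part.mem_unique hz hz']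

lemma mem_imp_apSet {e : ℕ} {p : Set ℕ} (he : ∀ y ∈ p, (ap e y).Dom) : e ∈ imp p (apSet e p) :=
  fun y hy => ⟨_, Part.get_mem (he y hy), y, hy, Part.get_mem _⟩

lemma mem_jU_of_mem {U : Multifun} {x : ℕ} {A : Set ℕ} (hA : A ∈ U x) : x ∈ jU U A :=
  ⟨A, hA, subset_rfl⟩

lemma transparent_of_opMonotone_jU {U : Multifun} (hU : OpMonotone (jU U)) : Transparent U := by
  obtain ⟨u, hu⟩ := hU
  refine ⟨u, fun e x A hA he => ?_⟩
  obtain ⟨c, hc, hcimp⟩ := hu A (apSet e A) e (mem_imp_apSet he)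
  exact ⟨c, hc, hcimp x (mem_jU_of_mem hA)⟩

lemma opMonotone_jU_of_transparent {U : Multifun} (hU : Transparent U) : OpMonotone (jU U) := by
  obtain ⟨u, hu⟩ := hU
  -- `u ∗ a` itself may diverge when `a` is total on no `U x`; its curried form is always defined.
  obtain ⟨v, hv⟩ := exists_ap_curry (F := fun a x => (ap u a).bind fun c => ap c x)
    ((ap_partrec₂.comp (Computable.const u) Computable.fst).bind
      (ap_partrec₂.comp Computable.snd (Computable.snd.comp Computable.fst)))
  refine ⟨v, fun p q a ha => ?_⟩
  obtain ⟨c', hc', hc'x⟩ := hv a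
  refine ⟨c', hc', fun x ⟨A, hA, hAp⟩ => ?_⟩
  have haA : a ∈ imp A q := imp_mono hAp subset_rfl ha
  obtain ⟨c, hc, d, hd, B, hB, hBA⟩ := hu a x A hA (dom_of_mem_imp haA)
  exact ⟨d, hc'x x ▸ Part.mem_bind hc hd, B, hB,
    hBA.trans (apSet_subset_of_mem_imp haA)⟩

lemma jU_presInter (U : Multifun) : presInter (jU U) := by
  intro ι _ p
  ext x
  simp only [jU, Set.mem_ofPred_eq, Set.mem_iInter]
  refine ⟨fun ⟨A, hA, hAp⟩ i => ⟨A, hA, fun y hy => Set.mem_iInter.1 (hAp hy) i⟩, fun hx => ?_⟩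
  obtain ⟨A, hA, -⟩ := hx (Classical.arbitrary ι)
  refine ⟨A, hA, fun y hy => Set.mem_iInter.2 fun i => ?_⟩
  obtain ⟨A', hA', hA'p⟩ := hx i
  exact hA'p (Part.mem_unique hA hA' ▸ hy)

namespace presInter

variable {j : Set ℕ → Set ℕ}

lemma map_inter (hj : presInter j) (p q : Set ℕ) : j (p ∩ q) = j p ∩ j q := by
  rw [Set.inter_eq_iInter, Set.inter_eq_iInter, hj]
  exact Set.iInter_congr fun b => by cases b <;> rfl

lemma monotone (hj : presInter j) : Monotone j := fun p q hpq => by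
  rw [← Set.inter_eq_left.2 hpq, hj.map_inter]
  exact Set.inter_subset_right

lemma mem_apply_sInter {x : ℕ} {p : Set ℕ} (hj : presInter j) (hx : x ∈ j p) :
    x ∈ j (⋂₀ {q | x ∈ j q}) := by
  have : Nonempty {q | x ∈ j q} := ⟨⟨p, hx⟩⟩
  rw [Set.sInter_eq_iInter, hj]
  exact Set.mem_iInter.2 fun q => q.2

lemma jU_Uop (hj : presInter j) : jU (Uop j) = j := by
  funext p
  ext x
  refine ⟨?_, fun hx => ⟨_, ⟨⟨p, hx⟩, rfl⟩, Set.sInter_subset_of_mem hx⟩⟩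
  rintro ⟨A, ⟨⟨p₀, hp₀⟩, rfl⟩, hAp⟩
  exact hj.monotone hAp (hj.mem_apply_sInter hp₀)

end presInter

lemma rRed_jU_of_wRed {f g : Multifun} (h : wRed f g) (hg : OpMonotone (jU g)) :
    rRed (jU f) (jU g) := by
  obtain ⟨em, ep, hw⟩ := h
  obtain ⟨u, hu⟩ := hg
  obtain ⟨v, hv⟩ := exists_ap_curry (F := fun x y => ap ep (Nat.pair x y))
    (ap_partrec₂.comp (Computable.const ep) Primrec₂.natPair.to_comp)
  obtain ⟨E, hE⟩ := exists_ap_eq (F := fun x => (ap em x).bind fun c =>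
      (ap v x).bind fun e => (ap u e).bind fun c' => ap c' c)
    ((ap_partrec₂.comp (Computable.const em) Computable.id).bind <|
      (ap_partrec₂.comp (Computable.const v) Computable.fst).bind <|
        (ap_partrec₂.comp (Computable.const u) Computable.snd).bind <|
          ap_partrec₂.comp Computable.snd
            ((Computable.snd.comp Computable.fst).comp Computable.fst))
  refine ⟨E, fun p x ⟨A, hA, hAp⟩ => ?_⟩
  obtain ⟨c, hc, B, hB, hBA⟩ := hw x A hA
  obtain ⟨e, he, hex⟩ := hv x
  have heB : e ∈ imp B p := fun y hy => by
    obtain ⟨z, hz, hzA⟩ := hBA y hy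
    exact ⟨z, hex y ▸ hz, hAp hzA⟩
  obtain ⟨c', hc', hc'imp⟩ := hu B p e heB
  obtain ⟨d, hd, hdp⟩ := hc'imp c (mem_jU_of_mem hB)
  exact ⟨d, hE x ▸ Part.mem_bind hc (Part.mem_bind he (Part.mem_bind hc' hd)), hdp⟩

lemma wRed_of_rRed_jU {f g : Multifun} (h : rRed (jU f) (jU g)) : wRed f g := by
  obtain ⟨e, he⟩ := h
  obtain ⟨ep, hep⟩ := exists_ap_eq (Computable.snd.comp Computable.unpair).partrec
  refine ⟨e, ep, fun x A hA => ?_⟩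
  obtain ⟨c, hc, B, hB, hBA⟩ := he A x (mem_jU_of_mem hA)
  exact ⟨c, hc, B, hB, fun y hy => ⟨y, by simp [hep], hBA hy⟩⟩

/-- for computably transparent `f, g`: `f ≤_W g ↔ j_f ≤_r j_g`;
for computably transparent `U`, `j_U` is monotone and intersection-preserving;
conversely for monotone intersection-preserving `j`, `U_j` is computably transparent
and `j_{U_j} = j`.  Hence the Weihrauch degrees are isomorphic to the r-degrees of
monotone intersection-preserving operations on Ω. -/
theorem weihrauch_rdeg_isomorphism :
    (∀ f g : Multifun, Transparent f → Transparent g →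
      (wRed f g ↔ rRed (jU f) (jU g))) ∧
    (∀ U : Multifun, Transparent U → OpMonotone (jU U) ∧ presInter (jU U)) ∧
    (∀ j : Set ℕ → Set ℕ, OpMonotone j → presInter j →
      Transparent (Uop j) ∧ jU (Uop j) = j) :=
  ⟨fun _ _ _ hg => ⟨fun h => rRed_jU_of_wRed h (opMonotone_jU_of_transparent hg),
      wRed_of_rRed_jU⟩,
    fun U hU => ⟨opMonotone_jU_of_transparent hU, jU_presInter U⟩,
    fun _ hm hj => ⟨transparent_of_opMonotone_jU (by rwa [hj.jU_Uop]), hj.jU_Uop⟩⟩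

end KleeneOracle
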